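/- arXiv:2511.16253 — 3 statements merged into one kernel-verified Lean document; each statement's English description precedes it below -/
import Mathlib

section
/- Let n ≥ 1, let P and M be real symmetric positive definite n×n matrices, let Φ be a real n×n matrix, and let γ > 0, θ ≥ 0 and 0 < ρ. Let x, w ∈ ℝ^n satisfy ‖w‖ ≤ θ and xᵀ P x > 1, and suppose the triggering condition −xᵀ Φᵀ (P + M) Φ x + (ρ − γ)·xᵀ P x − θ² λ_max(P M⁻¹ P + P) + γ ≥ 0 holds. Then (Φx + w)ᵀ P (Φx + w) ≤ ρ · xᵀ P x. -/
/-!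
Write `y = Φx`. Expanding the quadratic form, `(y + w)ᵀP(y + w) = yᵀPy + 2yᵀPw + wᵀPw`.
The cross term is absorbed by Young's inequality with weight `M`,
`2yᵀ(Pw) ≤ yᵀMy + (Pw)ᵀM⁻¹(Pw)`, and the remaining disturbance terms
`wᵀ(PM⁻¹P + P)w` are at most `λ_max θ²` by the Rayleigh bound. The triggering condition
then gives `(y + w)ᵀP(y + w) ≤ (ρ - γ) xᵀPx + γ`, and `γ ≤ γ xᵀPx` because `xᵀPx > 1`.
-/

open Matrix

/-- The identity map from plain vectors to Euclidean space (type synonym conversion). -/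
noncomputable def toE {n : ℕ} (v : Fin n → ℝ) : EuclideanSpace ℝ (Fin n) :=
  (WithLp.equiv 2 (Fin n → ℝ)).symm v

open RealInnerProductSpace

namespace Matrix

variable {ι : Type*} [Fintype ι]

theorem IsSymm.dotProduct_mulVec_comm {R : Type*} [CommSemiring R] {A : Matrix ι ι R}
    (hA : A.IsSymm) (u v : ι → R) : u ⬝ᵥ A *ᵥ v = v ⬝ᵥ A *ᵥ u := by
  rw [dotProduct_mulVec, ← mulVec_transpose, hA.eq, dotProduct_comm]

theorem IsSymm.add_dotProduct_mulVec_add {R : Type*} [CommRing R] {A : Matrix ι ι R}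
    (hA : A.IsSymm) (u v : ι → R) :
    (u + v) ⬝ᵥ A *ᵥ (u + v) = u ⬝ᵥ A *ᵥ u + 2 * (u ⬝ᵥ A *ᵥ v) + v ⬝ᵥ A *ᵥ v := by
  rw [mulVec_add, add_dotProduct, dotProduct_add, dotProduct_add, hA.dotProduct_mulVec_comm v u]
  ring

variable [DecidableEq ι]

/-- Completing the square: `0 ≤ (u - M⁻¹v)ᵀ M (u - M⁻¹v)`. -/
theorem PosDef.two_mul_dotProduct_le {M : Matrix ι ι ℝ} (hM : M.PosDef) (u v : ι → ℝ) :
    2 * (u ⬝ᵥ v) ≤ u ⬝ᵥ M *ᵥ u + v ⬝ᵥ M⁻¹ *ᵥ v := by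
  have hMz : M *ᵥ (M⁻¹ *ᵥ v) = v := by
    rw [mulVec_mulVec, mul_nonsing_inv M ((isUnit_iff_isUnit_det M).1 hM.isUnit), one_mulVec]
  have h := hM.posSemidef.dotProduct_mulVec_nonneg (u + -(M⁻¹ *ᵥ v))
  rw [star_trivial, (isHermitian_iff_isSymm.1 hM.isHermitian).add_dotProduct_mulVec_add] at h
  simp only [mulVec_neg, dotProduct_neg, neg_dotProduct, neg_neg, hMz] at h
  rw [dotProduct_comm (M⁻¹ *ᵥ v)] at h
  linarith

theorem IsHermitian.dotProduct_mulVec_le_iSup_eigenvalues_mul {H : Matrix ι ι ℝ}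
    (hH : H.IsHermitian) (w : EuclideanSpace ℝ ι) :
    w ⬝ᵥ H *ᵥ w ≤ (⨆ i, hH.eigenvalues i) * ‖w‖ ^ 2 := by
  set B := hH.eigenvectorBasis
  set T := toEuclideanLin H
  have hTB (i : ι) : T (B i) = hH.eigenvalues i • B i := by
    ext j
    simpa [T, toLpLin_apply] using congrFun (hH.mulVec_eigenvectorBasis i) j
  have hquad : w ⬝ᵥ H *ᵥ w = ∑ i, hH.eigenvalues i * ⟪B i, w⟫ ^ 2 := by
    have hinner : w ⬝ᵥ H *ᵥ w = ⟪w, T w⟫ := by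
      simp [T, toLpLin_apply, PiLp.inner_apply, dotProduct, mul_comm]
    rw [hinner, ← B.sum_inner_mul_inner w (T w)]
    refine Finset.sum_congr rfl fun i _ => ?_
    rw [← (isSymmetric_toEuclideanLin_iff.2 hH) (B i) w, hTB i, real_inner_smul_left,
      real_inner_comm w (B i)]
    ring
  have hnorm : ‖w‖ ^ 2 = ∑ i, ⟪B i, w⟫ ^ 2 := by
    rw [← real_inner_self_eq_norm_sq, ← B.sum_inner_mul_inner w w]
    simp only [real_inner_comm w, sq]
  rw [hquad, hnorm, Finset.mul_sum]
  gcongr with i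
  exact le_ciSup (Set.finite_range _).bddAbove i

theorem PosSemidef.iSup_eigenvalues_nonneg {A : Matrix ι ι ℝ} (hA : A.PosSemidef) :
    0 ≤ ⨆ i, hA.isHermitian.eigenvalues i :=
  Real.iSup_nonneg hA.eigenvalues_nonneg

end Matrix

theorem stmt9_general (n : ℕ) (P M Φ : Matrix (Fin n) (Fin n) ℝ)
    (hP : P.PosDef) (hM : M.PosDef)
    (γ θ ρ : ℝ) (hγ : 0 < γ)
    (hH : (P * M⁻¹ * P + P).IsHermitian)
    (x w : EuclideanSpace ℝ (Fin n)) (hw : ‖w‖ ≤ θ) (hx : 1 < x ⬝ᵥ P.mulVec x)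
    (htrig : 0 ≤ -((Φ.mulVec x) ⬝ᵥ (P + M).mulVec (Φ.mulVec x))
      + (ρ - γ) * (x ⬝ᵥ P.mulVec x) - θ ^ 2 * (⨆ i, hH.eigenvalues i) + γ) :
    (toE (Φ.mulVec x) + w) ⬝ᵥ P.mulVec (toE (Φ.mulVec x) + w) ≤
      ρ * (x ⬝ᵥ P.mulVec x) := by
  set y := Φ *ᵥ x
  set lmax := ⨆ i, hH.eigenvalues i
  have hPs : P.IsSymm := isHermitian_iff_isSymm.1 hP.isHermitian
  have hlmax : 0 ≤ lmax := by
    have := hM.inv.posSemidef.mul_mul_conjTranspose_same P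
    rw [hP.isHermitian.eq] at this
    exact (this.add hP.posSemidef).iSup_eigenvalues_nonneg
  have hnoise : w ⬝ᵥ (P * M⁻¹ * P + P) *ᵥ w ≤ θ ^ 2 * lmax := by
    calc w ⬝ᵥ (P * M⁻¹ * P + P) *ᵥ w ≤ lmax * ‖w‖ ^ 2 :=
          hH.dotProduct_mulVec_le_iSup_eigenvalues_mul w
      _ ≤ lmax * θ ^ 2 := by gcongr
      _ = θ ^ 2 * lmax := mul_comm _ _
  have hcross : 2 * (y ⬝ᵥ P *ᵥ w) ≤ y ⬝ᵥ M *ᵥ y + w ⬝ᵥ (P * M⁻¹ * P) *ᵥ w := by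
    have hPMP : (P *ᵥ w) ⬝ᵥ M⁻¹ *ᵥ (P *ᵥ w) = w ⬝ᵥ (P * M⁻¹ * P) *ᵥ w := by
      rw [← mulVec_mulVec, ← mulVec_mulVec, hPs.dotProduct_mulVec_comm w, dotProduct_comm]
    exact hPMP ▸ hM.two_mul_dotProduct_le y (P *ᵥ w)
  rw [add_mulVec, dotProduct_add] at hnoise htrig
  calc (toE y + w) ⬝ᵥ P *ᵥ (toE y + w)
      = y ⬝ᵥ P *ᵥ y + 2 * (y ⬝ᵥ P *ᵥ w) + w ⬝ᵥ P *ᵥ w := hPs.add_dotProduct_mulVec_add y w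
    _ ≤ (ρ - γ) * (x ⬝ᵥ P *ᵥ x) + γ := by linarith
    _ ≤ ρ * (x ⬝ᵥ P *ᵥ x) := by nlinarith

/-- Per-step decrease claim (Case (i)) in the proof of Proposition 3: outside the unit
ellipsoid, the quadratic triggering condition `(x,1)ᵀ U_σ (x,1) ≥ 0` implies
`(Φx + w)ᵀ P (Φx + w) ≤ ρ xᵀ P x` for any disturbance with `‖w‖ ≤ θ`. -/
theorem stmt9 (n : ℕ) (hn : 1 ≤ n) (P M Φ : Matrix (Fin n) (Fin n) ℝ)
    (hP : P.PosDef) (hM : M.PosDef)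
    (γ θ ρ : ℝ) (hγ : 0 < γ) (hθ : 0 ≤ θ) (hρ : 0 < ρ)
    (hH : (P * M⁻¹ * P + P).IsHermitian)
    (x w : EuclideanSpace ℝ (Fin n)) (hw : ‖w‖ ≤ θ) (hx : 1 < x ⬝ᵥ P.mulVec x)
    (htrig : 0 ≤ -((Φ.mulVec x) ⬝ᵥ (P + M).mulVec (Φ.mulVec x))
      + (ρ - γ) * (x ⬝ᵥ P.mulVec x) - θ ^ 2 * (⨆ i, hH.eigenvalues i) + γ) :
    (toE (Φ.mulVec x) + w) ⬝ᵥ P.mulVec (toE (Φ.mulVec x) + w) ≤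
      ρ * (x ⬝ᵥ P.mulVec x) :=
  stmt9_general n P M Φ hP hM γ θ ρ hγ hH x w hw hx htrig
end

section
/- Let n ≥ 1, let P and Q be real symmetric n×n matrices with P positive definite, Φ a real n×n matrix, and γ₁ > 0, γ₂ > 0, ρ > 0, θ > 0, ε > 0. Suppose the symmetric (2n+1)×(2n+1) block matrix U_c = [[−Φᵀ P Φ + (ρ − γ₁)P − εQ, −Φᵀ P, 0], [−P Φ, (γ₂/θ)I − P, 0], [0, 0, γ₁ − γ₂]] is positive semidefinite. Then for every x ∈ ℝ^n with xᵀ Q x ≥ 0 and xᵀ P x ≥ 1, and every w ∈ ℝ^n with ‖w‖² ≤ θ, one has (Φx + w)ᵀ P (Φx + w) ≤ ρ · xᵀ P x. -/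
/-!
Evaluate the quadratic form of `U_c` at `(x, w, 1)`. Since `P` is symmetric, the two off-diagonal
blocks combine with `Φᵀ P Φ` and `P` into `(Φx + w)ᵀ P (Φx + w)`, and the form becomes
`ρ xᵀPx - (Φx + w)ᵀP(Φx + w) - γ₁ (xᵀPx - 1) - ε xᵀQx - γ₂ (1 - ‖w‖²/θ)`.
Positive semidefiniteness makes this nonnegative, and each multiplier multiplies a quantity that is
nonnegative under the hypotheses, so the Lyapunov decrease follows (the S-procedure).
-/

open Matrix

section QuadraticForms

variable {R m n : Type*} [Fintype m] [Fintype n]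

theorem dotProduct_fromBlocks_mulVec [CommSemiring R] (A : Matrix m m R) (B : Matrix m n R)
    (C : Matrix n m R) (D : Matrix n n R) (u : m → R) (v : n → R) :
    Sum.elim u v ⬝ᵥ fromBlocks A B C D *ᵥ Sum.elim u v =
      u ⬝ᵥ A *ᵥ u + u ⬝ᵥ B *ᵥ v + (v ⬝ᵥ C *ᵥ u + v ⬝ᵥ D *ᵥ v) := by
  simp only [fromBlocks_mulVec, dotProduct_block, Sum.elim_comp_inl, Sum.elim_comp_inr,
    dotProduct_add]

theorem dotProduct_mulVec_comm_of_isSymm [CommSemiring R] {P : Matrix n n R} (hP : P.IsSymm)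
    (a b : n → R) : b ⬝ᵥ P *ᵥ a = a ⬝ᵥ P *ᵥ b := by
  rw [dotProduct_mulVec, ← mulVec_transpose, hP.eq, dotProduct_comm]

theorem add_dotProduct_mulVec_add_of_isSymm [CommSemiring R] {P : Matrix n n R}
    (hP : P.IsSymm) (a b : n → R) :
    (a + b) ⬝ᵥ P *ᵥ (a + b) = a ⬝ᵥ P *ᵥ a + 2 * (a ⬝ᵥ P *ᵥ b) + b ⬝ᵥ P *ᵥ b := by
  rw [mulVec_add, dotProduct_add, add_dotProduct, add_dotProduct,
    dotProduct_mulVec_comm_of_isSymm hP a b]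
  ring

end QuadraticForms

section SProcedure

variable {R ι : Type*} [Field R] [Fintype ι] [DecidableEq ι]

/-- The matrix `U_c` of the region-wise linear matrix inequality. -/
def sProcedureMatrix (P Q Φ : Matrix ι ι R) (γ₁ γ₂ ρ θ ε : R) :
    Matrix ((ι ⊕ ι) ⊕ Unit) ((ι ⊕ ι) ⊕ Unit) R :=
  fromBlocks
    (fromBlocks (-(Φᵀ * P * Φ) + (ρ - γ₁) • P - ε • Q) (-(Φᵀ * P))
      (-(P * Φ)) ((γ₂ / θ) • 1 - P))
    0 0 ((γ₁ - γ₂) • 1)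

theorem dotProduct_sProcedureMatrix_mulVec {P : Matrix ι ι R} (hP : P.IsSymm) (Q Φ : Matrix ι ι R)
    (γ₁ γ₂ ρ θ ε : R) (x w : ι → R) :
    Sum.elim (Sum.elim x w) 1 ⬝ᵥ sProcedureMatrix P Q Φ γ₁ γ₂ ρ θ ε *ᵥ Sum.elim (Sum.elim x w) 1 =
      ρ * (x ⬝ᵥ P *ᵥ x) - (Φ *ᵥ x + w) ⬝ᵥ P *ᵥ (Φ *ᵥ x + w)
        - γ₁ * (x ⬝ᵥ P *ᵥ x - 1) - ε * (x ⬝ᵥ Q *ᵥ x) - γ₂ * (1 - w ⬝ᵥ w / θ) := by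
  have hΦ : x ⬝ᵥ (Φᵀ * P * Φ) *ᵥ x = Φ *ᵥ x ⬝ᵥ P *ᵥ Φ *ᵥ x := by
    rw [← mulVec_mulVec, ← mulVec_mulVec, dotProduct_mulVec, vecMul_transpose]
  have hΦP : x ⬝ᵥ (Φᵀ * P) *ᵥ w = Φ *ᵥ x ⬝ᵥ P *ᵥ w := by
    rw [← mulVec_mulVec, dotProduct_mulVec, vecMul_transpose]
  have hPΦ : w ⬝ᵥ (P * Φ) *ᵥ x = Φ *ᵥ x ⬝ᵥ P *ᵥ w := by
    rw [← mulVec_mulVec, dotProduct_mulVec_comm_of_isSymm hP]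
  simp only [sProcedureMatrix, dotProduct_fromBlocks_mulVec, add_dotProduct_mulVec_add_of_isSymm hP,
    sub_mulVec, add_mulVec, neg_mulVec, smul_mulVec, one_mulVec, zero_mulVec,
    dotProduct_add, dotProduct_sub, dotProduct_neg, dotProduct_smul, dotProduct_zero, smul_eq_mul,
    one_dotProduct_one, Fintype.card_unit, Nat.cast_one,
    hΦ, hΦP, hPΦ]
  ring

end SProcedure

theorem stmt15_general (n : ℕ) (P Q Φ : Matrix (Fin n) (Fin n) ℝ)
    (hP : P.PosDef)
    (γ₁ γ₂ ρ θ ε : ℝ) (hγ₁ : 0 < γ₁) (hγ₂ : 0 < γ₂) (hθ : 0 < θ)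
    (hε : 0 < ε)
    (hU : (Matrix.fromBlocks
        (Matrix.fromBlocks (-(Φᵀ * P * Φ) + (ρ - γ₁) • P - ε • Q) (-(Φᵀ * P))
          (-(P * Φ)) ((γ₂ / θ) • (1 : Matrix (Fin n) (Fin n) ℝ) - P))
        0 0 ((γ₁ - γ₂) • (1 : Matrix Unit Unit ℝ))).PosSemidef) :
    ∀ x w : EuclideanSpace ℝ (Fin n),
      0 ≤ x ⬝ᵥ Q.mulVec x → 1 ≤ x ⬝ᵥ P.mulVec x → ‖w‖ ^ 2 ≤ θ →
      (toE (Φ.mulVec x) + w) ⬝ᵥ P.mulVec (toE (Φ.mulVec x) + w) ≤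
        ρ * (x ⬝ᵥ P.mulVec x) := by
  intro x w hQx hPx hw
  have hU' : (sProcedureMatrix P Q Φ γ₁ γ₂ ρ θ ε).PosSemidef := hU
  have hPsymm : P.IsSymm := isHermitian_iff_isSymm.mp hP.isHermitian
  have hz := hU'.dotProduct_mulVec_nonneg (Sum.elim (Sum.elim x w) 1)
  rw [star_trivial, dotProduct_sProcedureMatrix_mulVec hPsymm] at hz
  have hw_div : w.ofLp ⬝ᵥ w.ofLp / θ ≤ 1 := by
    have hnorm : w.ofLp ⬝ᵥ w.ofLp = ‖w‖ ^ 2 := by rw [← real_inner_self_eq_norm_sq]; rfl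
    rwa [div_le_one hθ, hnorm]
  change (Φ *ᵥ x + w.ofLp) ⬝ᵥ P *ᵥ (Φ *ᵥ x + w.ofLp) ≤ _
  linarith [mul_nonneg hε.le hQx, mul_nonneg hγ₁.le (sub_nonneg.mpr hPx),
    mul_nonneg hγ₂.le (sub_nonneg.mpr hw_div)]

/-- Region-wise S-procedure step in the proof of Proposition 4: positive semidefiniteness
of the `(2n+1)×(2n+1)` block matrix `U_c` (with conic-region multiplier `ε`) implies the
per-step Lyapunov decrease for all states of the region outside the unit ellipsoid and
all disturbances with `‖w‖² ≤ θ`. -/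
theorem stmt15 (n : ℕ) (hn : 1 ≤ n) (P Q Φ : Matrix (Fin n) (Fin n) ℝ)
    (hP : P.PosDef) (hQ : Q.IsSymm)
    (γ₁ γ₂ ρ θ ε : ℝ) (hγ₁ : 0 < γ₁) (hγ₂ : 0 < γ₂) (hρ : 0 < ρ) (hθ : 0 < θ)
    (hε : 0 < ε)
    (hU : (Matrix.fromBlocks
        (Matrix.fromBlocks (-(Φᵀ * P * Φ) + (ρ - γ₁) • P - ε • Q) (-(Φᵀ * P))
          (-(P * Φ)) ((γ₂ / θ) • (1 : Matrix (Fin n) (Fin n) ℝ) - P))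
        0 0 ((γ₁ - γ₂) • (1 : Matrix Unit Unit ℝ))).PosSemidef) :
    ∀ x w : EuclideanSpace ℝ (Fin n),
      0 ≤ x ⬝ᵥ Q.mulVec x → 1 ≤ x ⬝ᵥ P.mulVec x → ‖w‖ ^ 2 ≤ θ →
      (toE (Φ.mulVec x) + w) ⬝ᵥ P.mulVec (toE (Φ.mulVec x) + w) ≤
        ρ * (x ⬝ᵥ P.mulVec x) :=
  stmt15_general n P Q Φ hP γ₁ γ₂ ρ θ ε hγ₁ hγ₂ hθ hε hU
end

section
/- Let n ≥ 1, let P be a real symmetric positive definite n×n matrix, let Q_1, …, Q_N be real symmetric n×n matrices, and let γ₁ > 0, γ₂ > 0, ρ ∈ (0,1), θ > 0, C' ≥ 0, ϖ ≥ 0. Let (x_k)_{k∈ℕ} in ℝ^n, (Φ_k)_{k∈ℕ} real n×n matrices and (w_k)_{k∈ℕ} in ℝ^n satisfy x_{k+1} = Φ_k x_k + w_k. Suppose: (a) whenever x_kᵀ P x_k > 1, one has ‖w_k‖² ≤ θ and there exist c ∈ {1,…,N} and ε > 0 with x_kᵀ Q_c x_k ≥ 0 such that the symmetric block matrix [[−Φ_kᵀ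 P Φ_k + (ρ − γ₁)P − εQ_c, −Φ_kᵀ P, 0], [−P Φ_k, (γ₂/θ)I − P, 0], [0, 0, γ₁ − γ₂]] is positive semidefinite; (b) whenever x_kᵀ P x_k ≤ 1, one has ‖Φ_k‖ ≤ C' and ‖w_k‖ ≤ ϖ. Then, with μ = max(1, λ_max(P)·(C'/√(λ_min(P)) + ϖ)²), there exists K ∈ ℕ such that x_kᵀ P x_k ≤ μ for all k ≥ K; i.e., the trajectory converges to and remains in the ellipsoid E(P, μ). -/
open Matrix

/-!
Write `V k = x_kᵀ P x_k`. Outside the unit ellipsoid, evaluating the quadratic form of the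
LMI at `(x_k, w_k, 1)` and using `x_kᵀ Q_c x_k ≥ 0`, `V k ≥ 1` and `‖w_k‖² ≤ θ` gives
`V (k+1) ≤ ρ V k`; since `V k > 1`, `V` drops by at least `1 - ρ` per step, so it enters the
unit ellipsoid after finitely many steps. Inside it, `‖x_k‖ ≤ 1/√λ_min(P)`, hence
`‖x_{k+1}‖ ≤ C'/√λ_min(P) + ϖ` and `V (k+1) ≤ μ`. Since `ρ < 1`, outside steps never increase
`V`, so `E(P, μ)` is invariant from then on.
-/

open scoped MatrixOrder

theorem EuclideanSpace.dotProduct_self_eq_norm_sq {m : Type*} [Fintype m]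
    (x : EuclideanSpace ℝ m) : x ⬝ᵥ x = ‖x‖ ^ 2 := by
  rw [← real_inner_self_eq_norm_sq, EuclideanSpace.inner_eq_star_dotProduct, star_trivial]

section Rayleigh

variable {m : Type*} [Fintype m] [DecidableEq m] {A : Matrix m m ℝ}

theorem Matrix.IsHermitian.dotProduct_mulVec_le_iSup_eigenvalues_mul_s16
    (hA : A.IsHermitian) (v : m → ℝ) : v ⬝ᵥ A *ᵥ v ≤ (⨆ i, hA.eigenvalues i) * (v ⬝ᵥ v) := by
  have hle : A ≤ algebraMap ℝ _ (⨆ i, hA.eigenvalues i) := by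
    rw [le_algebraMap_iff_spectrum_le hA.isSelfAdjoint, hA.spectrum_real_eq_range_eigenvalues]
    rintro _ ⟨i, rfl⟩
    exact le_ciSup (Set.finite_range _).bddAbove i
  have := (Matrix.le_iff.mp hle).dotProduct_mulVec_nonneg v
  simp only [Algebra.algebraMap_eq_smul_one, sub_mulVec, smul_mulVec, one_mulVec,
    dotProduct_sub, dotProduct_smul, smul_eq_mul, star_trivial] at this
  linarith

theorem Matrix.IsHermitian.iInf_eigenvalues_mul_le_dotProduct_mulVec
    (hA : A.IsHermitian) (v : m → ℝ) : (⨅ i, hA.eigenvalues i) * (v ⬝ᵥ v) ≤ v ⬝ᵥ A *ᵥ v := by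
  have hle : algebraMap ℝ _ (⨅ i, hA.eigenvalues i) ≤ A := by
    rw [algebraMap_le_iff_le_spectrum hA.isSelfAdjoint, hA.spectrum_real_eq_range_eigenvalues]
    rintro _ ⟨i, rfl⟩
    exact ciInf_le (Set.finite_range _).bddBelow i
  have := (Matrix.le_iff.mp hle).dotProduct_mulVec_nonneg v
  simp only [Algebra.algebraMap_eq_smul_one, sub_mulVec, smul_mulVec, one_mulVec,
    dotProduct_sub, dotProduct_smul, smul_eq_mul, star_trivial] at this
  linarith

theorem Matrix.PosDef.norm_le_of_dotProduct_mulVec_le_one [Nonempty m] (hA : A.PosDef)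
    {x : EuclideanSpace ℝ m} (hx : x ⬝ᵥ A *ᵥ x ≤ 1) :
    ‖x‖ ≤ 1 / Real.sqrt (⨅ i, hA.1.eigenvalues i) := by
  have hmin : 0 < ⨅ i, hA.1.eigenvalues i := by
    obtain ⟨i, hi⟩ := exists_eq_ciInf_of_finite (f := hA.1.eigenvalues)
    exact hi ▸ hA.eigenvalues_pos i
  have hsq : ‖x‖ ^ 2 * (⨅ i, hA.1.eigenvalues i) ≤ 1 := by
    rw [← EuclideanSpace.dotProduct_self_eq_norm_sq]
    linarith [hA.1.iInf_eigenvalues_mul_le_dotProduct_mulVec x]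
  rw [le_div_iff₀ (Real.sqrt_pos.mpr hmin), ← Real.sqrt_sq (norm_nonneg x),
    ← Real.sqrt_mul (sq_nonneg _)]
  exact Real.sqrt_le_one.mpr hsq

theorem Matrix.PosDef.quadForm_step_le_of_norm_le [Nonempty m] (hA : A.PosDef)
    {B : Matrix m m ℝ} {x w : EuclideanSpace ℝ m} {C ϖ : ℝ} (hC : 0 ≤ C)
    (hx : x ⬝ᵥ A *ᵥ x ≤ 1) (hB : ‖toEuclideanCLM (𝕜 := ℝ) B‖ ≤ C) (hw : ‖w‖ ≤ ϖ) :
    (toEuclideanCLM (𝕜 := ℝ) B x + w) ⬝ᵥ A *ᵥ (toEuclideanCLM (𝕜 := ℝ) B x + w) ≤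
      (⨆ i, hA.1.eigenvalues i) * (C / Real.sqrt (⨅ i, hA.1.eigenvalues i) + ϖ) ^ 2 := by
  have hnorm : ‖toEuclideanCLM (𝕜 := ℝ) B x + w‖ ≤
      C / Real.sqrt (⨅ i, hA.1.eigenvalues i) + ϖ := by
    have hx' := hA.norm_le_of_dotProduct_mulVec_le_one hx
    calc _ ≤ ‖toEuclideanCLM (𝕜 := ℝ) B‖ * ‖x‖ + ‖w‖ :=
          (norm_add_le _ _).trans (by gcongr; exact (toEuclideanCLM (𝕜 := ℝ) B).le_opNorm x)
      _ ≤ C * (1 / Real.sqrt (⨅ i, hA.1.eigenvalues i)) + ϖ := by gcongr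
      _ = _ := by rw [mul_one_div]
  have hmax : 0 ≤ ⨆ i, hA.1.eigenvalues i :=
    Real.iSup_nonneg fun i => (hA.eigenvalues_pos i).le
  calc _ ≤ (⨆ i, hA.1.eigenvalues i) * ‖toEuclideanCLM (𝕜 := ℝ) B x + w‖ ^ 2 := by
        rw [← EuclideanSpace.dotProduct_self_eq_norm_sq]
        exact hA.1.dotProduct_mulVec_le_iSup_eigenvalues_mul_s16 _
    _ ≤ _ := by gcongr

end Rayleigh

section SProcedure

variable {m : Type*} [Fintype m] [DecidableEq m] {P Q Φ : Matrix m m ℝ} {γ₁ γ₂ ρ θ ε : ℝ}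

theorem quadForm_nonneg_of_lmi
    (hLMI : (fromBlocks
      (fromBlocks (-(Φᵀ * P * Φ) + (ρ - γ₁) • P - ε • Q) (-(Φᵀ * P)) (-(P * Φ))
        ((γ₂ / θ) • (1 : Matrix m m ℝ) - P))
      0 0 ((γ₁ - γ₂) • (1 : Matrix Unit Unit ℝ))).PosSemidef) (a b : m → ℝ) :
    0 ≤ -((Φ *ᵥ a) ⬝ᵥ P *ᵥ (Φ *ᵥ a)) + (ρ - γ₁) * (a ⬝ᵥ P *ᵥ a) - ε * (a ⬝ᵥ Q *ᵥ a)
      - (Φ *ᵥ a) ⬝ᵥ P *ᵥ b - b ⬝ᵥ P *ᵥ (Φ *ᵥ a) + γ₂ / θ * (b ⬝ᵥ b) - b ⬝ᵥ P *ᵥ b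
      + (γ₁ - γ₂) := by
  have h := hLMI.dotProduct_mulVec_nonneg (Sum.elim (Sum.elim a b) fun _ => 1)
  simp only [star_trivial, fromBlocks_mulVec, Sum.elim_comp_inl, Sum.elim_comp_inr,
    zero_mulVec, add_zero, zero_add, sumElim_dotProduct_sumElim, add_mulVec, sub_mulVec,
    neg_mulVec, smul_mulVec, one_mulVec, dotProduct_add, dotProduct_sub, dotProduct_neg,
    dotProduct_smul, smul_eq_mul, ← mulVec_mulVec, dotProduct_mulVec _ Φᵀ,
    vecMul_transpose] at h
  rw [show ((fun _ : Unit => (1 : ℝ)) ⬝ᵥ fun _ => 1) = 1 by simp [dotProduct]] at h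
  linarith

theorem quadForm_step_le_of_lmi (hγ₁ : 0 ≤ γ₁) (hγ₂ : 0 ≤ γ₂) (hθ : 0 < θ) (hε : 0 ≤ ε)
    {a b : m → ℝ} (ha : 1 ≤ a ⬝ᵥ P *ᵥ a) (hb : b ⬝ᵥ b ≤ θ) (hQ : 0 ≤ a ⬝ᵥ Q *ᵥ a)
    (hLMI : (fromBlocks
      (fromBlocks (-(Φᵀ * P * Φ) + (ρ - γ₁) • P - ε • Q) (-(Φᵀ * P)) (-(P * Φ))
        ((γ₂ / θ) • (1 : Matrix m m ℝ) - P))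
      0 0 ((γ₁ - γ₂) • (1 : Matrix Unit Unit ℝ))).PosSemidef) :
    (Φ *ᵥ a + b) ⬝ᵥ P *ᵥ (Φ *ᵥ a + b) ≤ ρ * (a ⬝ᵥ P *ᵥ a) := by
  have h := quadForm_nonneg_of_lmi hLMI a b
  have hw : γ₂ / θ * (b ⬝ᵥ b) ≤ γ₂ := by
    calc γ₂ / θ * (b ⬝ᵥ b) ≤ γ₂ / θ * θ := by gcongr
      _ = γ₂ := div_mul_cancel₀ _ hθ.ne'
  rw [mulVec_add, add_dotProduct, dotProduct_add, dotProduct_add]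
  linarith [mul_nonneg hε hQ, mul_le_mul_of_nonneg_left ha hγ₁]

end SProcedure

theorem exists_forall_ge_le_of_contract_above_one {V : ℕ → ℝ} {ρ μ : ℝ} (hρ : ρ < 1)
    (hμ : 1 ≤ μ) (hout : ∀ k, 1 < V k → V (k + 1) ≤ ρ * V k)
    (hin : ∀ k, V k ≤ 1 → V (k + 1) ≤ μ) :
    ∃ K, ∀ k ≥ K, V k ≤ μ := by
  have hentry : ∃ K, V K ≤ 1 := by
    by_contra! hall
    have hdec : ∀ k : ℕ, V k ≤ V 0 - k * (1 - ρ) := by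
      intro k
      induction k with
      | zero => simp
      | succ k ih =>
        push_cast
        have := mul_le_mul_of_nonneg_left (hall k).le (sub_nonneg.mpr hρ.le)
        linarith [hout k (hall k)]
    obtain ⟨k, hk⟩ := exists_nat_gt ((V 0 - 1) / (1 - ρ))
    rw [div_lt_iff₀ (sub_pos.mpr hρ)] at hk
    linarith [hdec k, hall k]
  obtain ⟨K, hK⟩ := hentry
  refine ⟨K, fun k hk => ?_⟩
  induction k, hk using Nat.le_induction with
  | base => linarith
  | succ k _ ih =>
    rcases le_or_gt (V k) 1 with h | h
    · exact hin k h
    · exact (hout k h).trans ((mul_le_of_le_one_left (by linarith) hρ.le).trans ih)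

theorem stmt16_general (n N : ℕ) (hn : 1 ≤ n)
    (P : Matrix (Fin n) (Fin n) ℝ) (hP : P.PosDef)
    (Q : Fin N → Matrix (Fin n) (Fin n) ℝ)
    (γ₁ γ₂ ρ θ C' ϖ : ℝ) (hγ₁ : 0 < γ₁) (hγ₂ : 0 < γ₂)
    (hρ : ρ ∈ Set.Ioo (0 : ℝ) 1) (hθ : 0 < θ) (hC' : 0 ≤ C')
    (x : ℕ → EuclideanSpace ℝ (Fin n)) (Φ : ℕ → Matrix (Fin n) (Fin n) ℝ)
    (w : ℕ → EuclideanSpace ℝ (Fin n))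
    (hdyn : ∀ k, x (k + 1) = toE ((Φ k).mulVec (x k)) + w k)
    (ha : ∀ k, 1 < x k ⬝ᵥ P.mulVec (x k) → ‖w k‖ ^ 2 ≤ θ ∧
      ∃ c : Fin N, ∃ ε : ℝ, 0 < ε ∧ 0 ≤ x k ⬝ᵥ (Q c).mulVec (x k) ∧
        (Matrix.fromBlocks
          (Matrix.fromBlocks (-((Φ k)ᵀ * P * (Φ k)) + (ρ - γ₁) • P - ε • Q c)
            (-((Φ k)ᵀ * P)) (-(P * (Φ k)))
            ((γ₂ / θ) • (1 : Matrix (Fin n) (Fin n) ℝ) - P))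
          0 0 ((γ₁ - γ₂) • (1 : Matrix Unit Unit ℝ))).PosSemidef)
    (hb : ∀ k, x k ⬝ᵥ P.mulVec (x k) ≤ 1 →
      ‖Matrix.toEuclideanCLM (𝕜 := ℝ) (Φ k)‖ ≤ C' ∧ ‖w k‖ ≤ ϖ) :
    ∃ K : ℕ, ∀ k ≥ K, x k ⬝ᵥ P.mulVec (x k) ≤
      max 1 ((⨆ i, hP.1.eigenvalues i) *
        (C' / Real.sqrt (⨅ i, hP.1.eigenvalues i) + ϖ) ^ 2) := by
  have : Nonempty (Fin n) := Fin.pos_iff_nonempty.mp hn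
  refine exists_forall_ge_le_of_contract_above_one hρ.2 (le_max_left _ _) (fun k hk => ?_)
    (fun k hk => ?_)
  · obtain ⟨hw, _, ε, hε, hQ, hLMI⟩ := ha k hk
    rw [hdyn k]
    exact quadForm_step_le_of_lmi hγ₁.le hγ₂.le hθ hε.le hk.le
      (by rwa [EuclideanSpace.dotProduct_self_eq_norm_sq]) hQ hLMI
  · obtain ⟨hΦ, hw⟩ := hb k hk
    rw [hdyn k]
    exact (hP.quadForm_step_le_of_norm_le hC' hk hΦ hw).trans (le_max_right _ _)

/-- Proposition 4 (offline self-triggering mechanism, perturbed case), trajectory level: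
outside the unit ellipsoid the chosen horizon is certified by a region-wise
`(2n+1)×(2n+1)` S-procedure LMI; inside it the sensor-free transition
(`‖Φ_k‖ ≤ C'`, `‖w_k‖ ≤ ϖ`) is applied. Then the trajectory converges to and remains
in `E(P, μ)` with `μ = max(1, λ_max(P)(C'/√(λ_min(P)) + ϖ)²)` — global uniform
ultimate boundedness. -/
theorem stmt16 (n N : ℕ) (hn : 1 ≤ n)
    (P : Matrix (Fin n) (Fin n) ℝ) (hP : P.PosDef)
    (Q : Fin N → Matrix (Fin n) (Fin n) ℝ) (hQ : ∀ c, (Q c).IsSymm)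
    (γ₁ γ₂ ρ θ C' ϖ : ℝ) (hγ₁ : 0 < γ₁) (hγ₂ : 0 < γ₂)
    (hρ : ρ ∈ Set.Ioo (0 : ℝ) 1) (hθ : 0 < θ) (hC' : 0 ≤ C') (hϖ : 0 ≤ ϖ)
    (x : ℕ → EuclideanSpace ℝ (Fin n)) (Φ : ℕ → Matrix (Fin n) (Fin n) ℝ)
    (w : ℕ → EuclideanSpace ℝ (Fin n))
    (hdyn : ∀ k, x (k + 1) = toE ((Φ k).mulVec (x k)) + w k)
    (ha : ∀ k, 1 < x k ⬝ᵥ P.mulVec (x k) → ‖w k‖ ^ 2 ≤ θ ∧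
      ∃ c : Fin N, ∃ ε : ℝ, 0 < ε ∧ 0 ≤ x k ⬝ᵥ (Q c).mulVec (x k) ∧
        (Matrix.fromBlocks
          (Matrix.fromBlocks (-((Φ k)ᵀ * P * (Φ k)) + (ρ - γ₁) • P - ε • Q c)
            (-((Φ k)ᵀ * P)) (-(P * (Φ k)))
            ((γ₂ / θ) • (1 : Matrix (Fin n) (Fin n) ℝ) - P))
          0 0 ((γ₁ - γ₂) • (1 : Matrix Unit Unit ℝ))).PosSemidef)
    (hb : ∀ k, x k ⬝ᵥ P.mulVec (x k) ≤ 1 →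
      ‖Matrix.toEuclideanCLM (𝕜 := ℝ) (Φ k)‖ ≤ C' ∧ ‖w k‖ ≤ ϖ) :
    ∃ K : ℕ, ∀ k ≥ K, x k ⬝ᵥ P.mulVec (x k) ≤
      max 1 ((⨆ i, hP.1.eigenvalues i) *
        (C' / Real.sqrt (⨅ i, hP.1.eigenvalues i) + ϖ) ^ 2) :=
  stmt16_general n N hn P hP Q γ₁ γ₂ ρ θ C' ϖ hγ₁ hγ₂ hρ hθ hC' x Φ w hdyn ha hb
end
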